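/- arXiv:2408.13769 — 9 statements merged into one kernel-verified Lean document; each statement's English description precedes it below -/
import Mathlib

section
/- Let (L, W) be a monotonic logical structure. Define for each Σ ⊆ L the valuation μ_Σ : L → {0,1,2,3} by μ_Σ(β) = 0 if β ∉ W(Σ) ∪ Σ, 1 if β ∈ Σ ∩ W(Σ), 2 if β ∈ Σ \ W(Σ), 3 if β ∈ W(Σ) \ Σ. Let M = {μ_Σ : Σ ⊆ L}, and set m ⊨₁ Γ iff m(Γ) ⊆ {1,2} and m ⊨₂ Γ iff m(Γ) ⊆ {1,3}. Then for all Γ ⊆ L and α ∈ L: α ∈ W(Γ) iff for all m ∈ M, m ⊨₁ Γ implies m ⊨₂ {α}. Thus every monotonic logical structure has an adequate functionally 4-valued semantics. -/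
open Classical in
/-- The 4-valued valuation μ_Σ associated to a set Σ in a monotonic
logical structure. -/
noncomputable def mu4 {L : Type*} (W : Set L → Set L) (Δ : Set L) (β : L) : ℕ :=
  if β ∈ Δ ∩ W Δ then 1
  else if β ∈ Δ \ W Δ then 2
  else if β ∈ W Δ \ Δ then 3
  else 0

lemma mu4_mem12 {L : Type*} (W : Set L → Set L) (Δ : Set L) (β : L) :
    mu4 W Δ β ∈ ({1, 2} : Set ℕ) ↔ β ∈ Δ := by
  unfold mu4
  split_ifs with h1 h2 h3 <;> simp_all [Set.mem_insert_iff]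

lemma mu4_mem13 {L : Type*} (W : Set L → Set L) (Δ : Set L) (β : L) :
    mu4 W Δ β ∈ ({1, 3} : Set ℕ) ↔ β ∈ W Δ := by
  unfold mu4
  split_ifs with h1 h2 h3 <;> simp_all [Set.mem_insert_iff]

/-- Representation theorem for monotonic logical structures (Part II):
every monotonic logical structure has an adequate functionally 4-valued
semantics. -/
theorem monotone_functionally_four_valued {L : Type*} (W : Set L → Set L)
    (hmono : ∀ Γ Δ : Set L, Γ ⊆ Δ → W Γ ⊆ W Δ) :
    ∀ (Γ : Set L) (α : L),
      α ∈ W Γ ↔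
        ∀ Δ : Set L,
          (∀ β ∈ Γ, mu4 W Δ β ∈ ({1, 2} : Set ℕ)) →
          mu4 W Δ α ∈ ({1, 3} : Set ℕ) := by
  intro Γ α
  constructor
  · intro hα Δ hΔ
    rw [mu4_mem13]
    exact hmono Γ Δ (fun β hβ => (mu4_mem12 W Δ β).mp (hΔ β hβ)) hα
  · intro h
    have := h Γ (fun β hβ => (mu4_mem12 W Γ β).mpr hβ)
    exact (mu4_mem13 W Γ α).mp this
end

section
/- Let (L, W) be a logical structure. The following are equivalent: (1) W is a q-consequence operator (monotonic and satisfying W(W(Γ) ∪ Γ) = W(Γ) for all Γ); (2) W is monotonic and W(W^∞(Γ)) = W(Γ) for all Γ, where W^∞(Γ) = ⋃_{i≥0} W^i(Γ) with W^0(Γ) = Γ; (3) every Δ ⊆ L is downward q-closed, i.e., for all Σ ⊆ W^∞(Δ), W(Σ) ⊆ W(Δ); (4) for all Γ ∪ {α} ⊆ L, if α ∉ W(Γ) then there exists a downward q-closed Σ ⊇ Γ with α ∉ W(Σ); (5) for all Γ, Σ ⊆ L, Γ ⊆ W(Σ) ∪ Σ implies W(Γ) ⊆ W(Σ). -/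
/-- W^∞(Δ) = ⋃ᵢ Wⁱ(Δ). -/
def Winf {L : Type*} (W : Set L → Set L) (Δ : Set L) : Set L :=
  ⋃ i : ℕ, W^[i] Δ

/-- Δ is downward q-closed. -/
def DownwardQClosed {L : Type*} (W : Set L → Set L) (Δ : Set L) : Prop :=
  ∀ Θ ⊆ Winf W Δ, W Θ ⊆ W Δ

lemma self_subset_Winf {L : Type*} (W : Set L → Set L) (Δ : Set L) :
    Δ ⊆ Winf W Δ := by
  intro x hx
  exact Set.mem_iUnion.2 ⟨0, hx⟩

lemma W_subset_Winf {L : Type*} (W : Set L → Set L) (Δ : Set L) :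
    W Δ ⊆ Winf W Δ := by
  intro x hx
  exact Set.mem_iUnion.2 ⟨1, by simpa using hx⟩

/-- Characterisation of q-type logical structures. -/
theorem qConsequence_characterisation {L : Type*} (W : Set L → Set L) :
    [ (Monotone W ∧ ∀ Γ : Set L, W (W Γ ∪ Γ) = W Γ),
      (Monotone W ∧ ∀ Γ : Set L, W (Winf W Γ) = W Γ),
      (∀ Δ : Set L, DownwardQClosed W Δ),
      (∀ (Γ : Set L) (α : L), α ∉ W Γ →
        ∃ Δ : Set L, Γ ⊆ Δ ∧ DownwardQClosed W Δ ∧ α ∉ W Δ),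
      (∀ Γ Δ : Set L, Γ ⊆ W Δ ∪ Δ → W Γ ⊆ W Δ) ].TFAE := by
  tfae_have 1 → 2 := by
    rintro ⟨hmono, hq⟩
    refine ⟨hmono, fun Γ => ?_⟩
    have hiter : ∀ i, W^[i] Γ ⊆ W Γ ∪ Γ := by
      intro i
      induction i with
      | zero => simp
      | succ n ih =>
        rw [Function.iterate_succ_apply']
        exact (hmono ih).trans (by rw [hq]; exact Set.subset_union_left)
    have hsub : Winf W Γ ⊆ W Γ ∪ Γ := Set.iUnion_subset hiter
    apply Set.Subset.antisymm
    · exact (hmono hsub).trans (le_of_eq (hq Γ))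
    · exact hmono (self_subset_Winf W Γ)
  tfae_have 2 → 3 := by
    rintro ⟨hmono, hq⟩ Δ Θ hΘ
    exact (hmono hΘ).trans (le_of_eq (hq Δ))
  tfae_have 3 → 4 := by
    intro h Γ α hα
    exact ⟨Γ, subset_rfl, h Γ, hα⟩
  tfae_have 4 → 5 := by
    intro h Γ Δ hΓ
    intro α hαΓ
    by_contra hαΔ
    obtain ⟨S, hΔS, hdqc, hαS⟩ := h Δ α hαΔ
    have hΔinf : Δ ⊆ Winf W S := hΔS.trans (self_subset_Winf W S)
    have hWΔ : W Δ ⊆ W S := hdqc Δ hΔinf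
    have hΓinf : Γ ⊆ Winf W S := by
      refine hΓ.trans (Set.union_subset ?_ hΔinf)
      exact hWΔ.trans (W_subset_Winf W S)
    exact hαS (hdqc Γ hΓinf hαΓ)
  tfae_have 5 → 1 := by
    intro h
    have hmono : Monotone W := fun Γ S hsub =>
      h Γ S (hsub.trans Set.subset_union_right)
    refine ⟨hmono, fun Γ => ?_⟩
    apply Set.Subset.antisymm
    · exact h _ _ subset_rfl
    · exact h Γ (W Γ ∪ Γ) (Set.subset_union_right.trans Set.subset_union_right)
  tfae_finish
end

section
/- Let S = (M, ⊨₁, ⊨₂, {(⊨₁,⊨₂)}, P(L)) be a strongly granular semantics such that ⊨₂ ⊆ ⊨₁. Then the induced consequence operator W_S is a q-consequence operator: it is monotonic and satisfies W_S(W_S(Γ) ∪ Γ) = W_S(Γ) for all Γ ⊆ L. -/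
/-- Representation theorem for q-type (Part I): a strongly granular semantics
with ⊨₂ ⊆ ⊨₁ induces a q-consequence operator. -/
theorem stronglyGranular_q {L M : Type*}
    (r1 r2 : M → Set L → Prop)
    (hg1 : ∀ (m : M) (Γ : Set L), r1 m Γ ↔ ∀ α ∈ Γ, r1 m {α})
    (hg2 : ∀ (m : M) (Γ : Set L), r2 m Γ ↔ ∀ α ∈ Γ, r2 m {α})
    (hsub : ∀ (m : M) (Γ : Set L), r2 m Γ → r1 m Γ) :
    (∀ Γ Δ : Set L, Γ ⊆ Δ →
      {α : L | ∀ m : M, r1 m Γ → r2 m {α}} ⊆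
      {α : L | ∀ m : M, r1 m Δ → r2 m {α}}) ∧
    (∀ Γ : Set L,
      {α : L | ∀ m : M,
          r1 m ({β : L | ∀ m' : M, r1 m' Γ → r2 m' {β}} ∪ Γ) → r2 m {α}} =
      {α : L | ∀ m : M, r1 m Γ → r2 m {α}}) := by
  constructor
  · intro Γ Δ hΓΔ α hα m hm
    exact hα m ((hg1 m Γ).mpr fun β hβ => (hg1 m Δ).mp hm β (hΓΔ hβ))
  · intro Γ
    ext α
    simp only [Set.mem_setOf_eq]
    constructor
    · intro h m hm
      refine h m ((hg1 m _).mpr ?_)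
      rintro β (hβ | hβ)
      · exact hsub m {β} (hβ m hm)
      · exact (hg1 m Γ).mp hm β hβ
    · intro h m hm
      exact h m ((hg1 m Γ).mpr fun β hβ => (hg1 m _).mp hm β (Or.inr hβ))
end

section
/- Let (L, W) be a q-type logical structure. Define for each Σ ⊆ L the map μ_Σ : L → {0,1,2} by μ_Σ(β) = 0 if β ∉ W(Σ) ∪ Σ, 1 if β ∈ W(Σ), 2 if β ∈ (W(Σ) ∪ Σ) \ W(Σ). Let M = {μ_Σ : Σ ⊆ L}, m ⊨₁ Γ iff m(Γ) ⊆ {1,2}, and m ⊨₂ Γ iff m(Γ) ⊆ {1}. Then for all Γ ⊆ L and α ∈ L: α ∈ W(Γ) iff for all m ∈ M, m ⊨₁ Γ implies m ⊨₂ {α}. -/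
open Classical in
/-- The 3-valued valuation μ_Σ for q-type structures: 1 if β ∈ W(Σ),
2 if β ∈ (W(Σ) ∪ Σ) \ W(Σ), 0 otherwise. -/
noncomputable def muQ {L : Type*} (W : Set L → Set L) (Δ : Set L) (β : L) : ℕ :=
  if β ∈ W Δ then 1
  else if β ∈ (W Δ ∪ Δ) \ W Δ then 2
  else 0

open Classical in
lemma muQ_one_iff {L : Type*} (W : Set L → Set L) (Δ : Set L) (β : L) :
    muQ W Δ β = 1 ↔ β ∈ W Δ := by
  unfold muQ
  split_ifs with h1 h2 <;> simp [h1]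

open Classical in
lemma muQ_mem12_iff {L : Type*} (W : Set L → Set L) (Δ : Set L) (β : L) :
    muQ W Δ β ∈ ({1, 2} : Set ℕ) ↔ β ∈ W Δ ∪ Δ := by
  unfold muQ
  split_ifs with h1 h2 <;>
    simp_all [Set.mem_union, Set.mem_diff] <;> tauto

/-- Representation theorem for q-type (Part II): every q-type logical
structure has an adequate functionally 3-valued semantics. -/
theorem qType_functionally_three_valued {L : Type*} (W : Set L → Set L)
    (hmono : ∀ Γ Δ : Set L, Γ ⊆ Δ → W Γ ⊆ W Δ)
    (hqc : ∀ Γ : Set L, W (W Γ ∪ Γ) = W Γ) :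
    ∀ (Γ : Set L) (α : L),
      α ∈ W Γ ↔
        ∀ Δ : Set L,
          (∀ β ∈ Γ, muQ W Δ β ∈ ({1, 2} : Set ℕ)) →
          muQ W Δ α ∈ ({1} : Set ℕ) := by
  intro Γ α
  constructor
  · intro hα Δ hΔ
    have hsub : Γ ⊆ W Δ ∪ Δ := fun β hβ => (muQ_mem12_iff W Δ β).mp (hΔ β hβ)
    have : α ∈ W Δ := by
      have := hmono Γ (W Δ ∪ Δ) hsub hα
      rwa [hqc Δ] at this
    simpa using (muQ_one_iff W Δ α).mpr this
  · intro h
    have : muQ W Γ α ∈ ({1} : Set ℕ) := by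
      apply h Γ
      intro β hβ
      exact (muQ_mem12_iff W Γ β).mpr (Or.inr hβ)
    exact (muQ_one_iff W Γ α).mp (by simpa using this)
end

section
/- Every logical structure induced by a non-reflexive q-consequence operator is inferentially 3-valued; in particular, there is no functionally 2-valued semantics S with W = W_S. Concretely: if W is a q-consequence operator on L that is not reflexive (i.e., there exists Γ with Γ ⊄ W(Γ)), then there is no set M ⊆ {0,1}^L and nonempty designated sets D₁, D₂ ⊊ {0,1} with D₁ ∪ D₂ ⊊ {0,1} such that for all Γ and α, α ∈ W(Γ) iff for all m ∈ M, m(Γ) ⊆ D₁ implies m(α) ∈ D₂. -/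
/-- Inferential irreducibility theorem for q-type: a non-reflexive
q-consequence operator admits no adequate functionally 2-valued semantics. -/
theorem nonreflexive_q_not_two_valued {L : Type*} (W : Set L → Set L)
    (hmono : ∀ Γ Δ : Set L, Γ ⊆ Δ → W Γ ⊆ W Δ)
    (hqc : ∀ Γ : Set L, W (W Γ ∪ Γ) = W Γ)
    (hnonrefl : ∃ Γ : Set L, ¬ Γ ⊆ W Γ) :
    ¬ ∃ (M : Set (L → Fin 2)) (D1 D2 : Set (Fin 2)),
        D1.Nonempty ∧ D2.Nonempty ∧
        D1 ⊂ Set.univ ∧ D2 ⊂ Set.univ ∧ D1 ∪ D2 ⊂ Set.univ ∧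
        (∀ (Γ : Set L) (α : L),
          α ∈ W Γ ↔ ∀ m ∈ M, (∀ β ∈ Γ, m β ∈ D1) → m α ∈ D2) := by
  rintro ⟨M, D1, D2, h1, ⟨b, hb⟩, _, _, hsu, hiff⟩
  -- there is some x outside D1 ∪ D2
  obtain ⟨x, hx⟩ : ∃ x, x ∉ D1 ∪ D2 := by
    rcases Set.exists_of_ssubset hsu with ⟨x, _, hx⟩
    exact ⟨x, hx⟩
  -- hence D1 ⊆ D2 (both avoid x, and Fin 2 has only two elements)
  have hsub : D1 ⊆ D2 := by
    intro a ha
    have hax : a ≠ x := fun h => hx (Or.inl (h ▸ ha))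
    have hbx : b ≠ x := fun h => hx (Or.inr (h ▸ hb))
    have : a = b := by omega
    exact this ▸ hb
  -- then W is reflexive, contradiction
  obtain ⟨Γ, hΓ⟩ := hnonrefl
  apply hΓ
  intro α hα
  exact (hiff Γ α).mpr (fun m _ hm => hsub (hm α hα))
end

section
/- Let (L, W) be a p-type logical structure. Define for each Σ ⊆ L the map μ_Σ : L → {0,1,2} by μ_Σ(β) = 0 if β ∉ W(Σ), 1 if β ∈ Σ, 2 if β ∈ W(Σ) \ Σ. Let M = {μ_Σ : Σ ⊆ L}, m ⊨₁ Γ iff m(Γ) ⊆ {1}, and m ⊨₂ Γ iff m(Γ) ⊆ {1,2}. Then for all Γ ⊆ L and α ∈ L: α ∈ W(Γ) iff for all m ∈ M, m ⊨₁ Γ implies m ⊨₂ {α}. -/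
open Classical in
/-- The 3-valued valuation μ_Σ for p-type structures: 1 if β ∈ Σ,
2 if β ∈ W(Σ) \ Σ, 0 if β ∉ W(Σ). -/
noncomputable def muP {L : Type*} (W : Set L → Set L) (Δ : Set L) (β : L) : ℕ :=
  if β ∈ Δ then 1
  else if β ∈ W Δ \ Δ then 2
  else 0

/-- Representation theorem for p-type (Part II): every p-type logical
structure has an adequate functionally 3-valued semantics. -/
theorem pType_functionally_three_valued {L : Type*} (W : Set L → Set L)
    (hrefl : ∀ Γ : Set L, Γ ⊆ W Γ)
    (hmono : ∀ Γ Δ : Set L, Γ ⊆ Δ → W Γ ⊆ W Δ) :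
    ∀ (Γ : Set L) (α : L),
      α ∈ W Γ ↔
        ∀ Δ : Set L,
          (∀ β ∈ Γ, muP W Δ β ∈ ({1} : Set ℕ)) →
          muP W Δ α ∈ ({1, 2} : Set ℕ) := by
  intro Γ α
  constructor
  · intro hα Δ h
    have hΓΔ : Γ ⊆ Δ := by
      intro β hβ
      have := h β hβ
      simp only [muP, Set.mem_singleton_iff] at this
      by_contra hc
      simp [hc] at this
      split_ifs at this <;> omega
    have hαΔ : α ∈ W Δ := hmono Γ Δ hΓΔ hα
    simp only [muP]
    by_cases hαd : α ∈ Δ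
    · simp [hαd]
    · simp [hαd, hαΔ]
  · intro h
    have := h Γ (fun β hβ => by simp [muP, hβ])
    simp only [muP] at this
    split_ifs at this with h1 h2
    · exact hrefl Γ h1
    · exact h2.1
    · simp at this
end

section
/- There exists no logical structure (L, W) such that W is an r₁-consequence operator; i.e., no W : P(L) → P(L) can simultaneously be monotonic, non-reflexive (some Γ with Γ ⊄ W(Γ)), satisfy non-quasi-closure (some Γ with W(Γ) ⊄ Γ), and satisfy non-anti-reflexivity₁ (for all Γ with |Γ| ≥ 1, Γ ⊄ L \ W(Γ)). -/
/-- There is no r₁-consequence operator: no W can be monotonic, non-reflexive,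
non-quasi-closed, and non-anti-reflexive₁. -/
theorem no_r1_consequence {L : Type*} (W : Set L → Set L) :
    ¬ ((∀ Γ Δ : Set L, Γ ⊆ Δ → W Γ ⊆ W Δ) ∧
        (∃ Γ : Set L, ¬ Γ ⊆ W Γ) ∧
        (∃ Γ : Set L, ¬ W Γ ⊆ Γ) ∧
        (∀ Γ : Set L, Γ.Nonempty → ¬ Γ ⊆ (W Γ)ᶜ)) := by
  rintro ⟨mono, ⟨Γ, hΓ⟩, -, hnar⟩
  obtain ⟨a, haΓ, haW⟩ := Set.not_subset.mp hΓ
  have h1 := hnar {a} ⟨a, rfl⟩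
  have ha : a ∈ W {a} := by
    by_contra h
    exact h1 (fun x hx => by simp_all)
  exact haW (mono {a} Γ (by simpa) ha)
end

section
/- Let L be a set and S = (B, R, ⊨, P(L)) a normal S-semantics for L. Then the type-I induced consequence operator W defined by α ∈ W(Γ) iff for all (v,w) ∈ R, v(Γ) ⊆ {1} implies w(α) = 1, is monotonic. Moreover, conversely, if (L, W) is any monotonic logical structure, then taking B = {χ_Γ : Γ ⊆ L} (characteristic functions) and R = {(χ_Γ, χ_{W(Γ)}) : Γ ⊆ L}, the resulting type-I consequence operator equals W. Hence every monotonic logical structure has an adequate type-I normal S-semantics (bivalent semantics). -/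
open Classical in
/-- The {0,1}-valued characteristic function of a set. -/
noncomputable def chi {L : Type*} (Γ : Set L) (β : L) : Fin 2 :=
  if β ∈ Γ then 1 else 0

/-- Suszko reduction for monotonic logical structures: (I) the type-I
consequence operator induced by any normal S-semantics is monotonic, and
(II) every monotonic logical structure is adequate w.r.t. the type-I normal
S-semantics with B = {χ_Γ : Γ ⊆ L} and R = {(χ_Γ, χ_{W(Γ)}) : Γ ⊆ L}. -/
theorem suszko_monotone {L : Type*} (W : Set L → Set L) :
    (∀ (B : Set (L → Fin 2)) (R : Set ((L → Fin 2) × (L → Fin 2))),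
      R ⊆ B ×ˢ B →
      ∀ Γ Δ : Set L, Γ ⊆ Δ →
        {α : L | ∀ p ∈ R, (∀ β ∈ Γ, p.1 β = 1) → p.2 α = 1} ⊆
        {α : L | ∀ p ∈ R, (∀ β ∈ Δ, p.1 β = 1) → p.2 α = 1}) ∧
    ((∀ Γ Δ : Set L, Γ ⊆ Δ → W Γ ⊆ W Δ) →
      ∀ Γ : Set L,
        W Γ = {α : L | ∀ p ∈ {q : (L → Fin 2) × (L → Fin 2) |
            ∃ Δ : Set L, q = (chi Δ, chi (W Δ))},
          (∀ β ∈ Γ, p.1 β = 1) → p.2 α = 1}) := by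
  constructor
  · intro B R _ Γ Δ hΓΔ α hα p hp h
    exact hα p hp fun β hβ => h β (hΓΔ hβ)
  · intro hmono Γ
    ext α
    constructor
    · intro hα p hp h
      obtain ⟨Δ, rfl⟩ := hp
      have hΓΔ : Γ ⊆ Δ := by
        intro β hβ
        have := h β hβ
        simp only [chi] at this
        by_contra hb
        simp [hb] at this
      have : α ∈ W Δ := hmono Γ Δ hΓΔ hα
      simp [chi, this]
    · intro hα
      have := hα (chi Γ, chi (W Γ)) ⟨Γ, rfl⟩ (fun β hβ => by simp [chi, hβ])
      simp only [chi] at this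
      by_contra hb
      simp [hb] at this
end

section
/- Let (L, W) be a q-type logical structure. Let B = {χ_{W(Γ)∪Γ} : Γ ⊆ L} ∪ {χ_{W(Γ)} : Γ ⊆ L} and R = {(χ_{W(Γ)∪Γ}, χ_{W(Γ)}) : Γ ⊆ L}. Then for all Γ ⊆ L and α ∈ L: α ∈ W(Γ) iff for all (v,w) ∈ R, v(Γ) ⊆ {1} implies w(α) = 1. Thus every q-type logical structure has an adequate type-I normal S-semantics (Suszko Reduction for q-type). -/
/-- Suszko reduction for q-type (Part II): every q-type logical structure is
adequate w.r.t. the type-I normal S-semantics with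
R = {(χ_{W(Γ)∪Γ}, χ_{W(Γ)}) : Γ ⊆ L}. -/
theorem suszko_qType {L : Type*} (W : Set L → Set L)
    (hmono : ∀ Γ Δ : Set L, Γ ⊆ Δ → W Γ ⊆ W Δ)
    (hqc : ∀ Γ : Set L, W (W Γ ∪ Γ) = W Γ) :
    ∀ (Γ : Set L) (α : L),
      α ∈ W Γ ↔
        ∀ p ∈ {q : (L → Fin 2) × (L → Fin 2) |
            ∃ Δ : Set L, q = (chi (W Δ ∪ Δ), chi (W Δ))},
          (∀ β ∈ Γ, p.1 β = 1) → p.2 α = 1 := by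
  intro Γ α
  constructor
  · rintro hα p ⟨Δ, rfl⟩ hΓ
    simp only
    have hsub : Γ ⊆ W Δ ∪ Δ := by
      intro β hβ
      have := hΓ β hβ
      simp only [chi] at this
      by_contra h
      simp [h] at this
    have : α ∈ W Δ := (hqc Δ) ▸ hmono Γ (W Δ ∪ Δ) hsub hα
    simp [chi, this]
  · intro h
    have := h (chi (W Γ ∪ Γ), chi (W Γ)) ⟨Γ, rfl⟩ (fun β hβ => by
      simp [chi, Set.mem_union, Or.inr hβ])
    simp only [chi] at this
    by_contra hc
    simp [hc] at this
end
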